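/- arXiv:1204.5323 — 2 statements merged into one kernel-verified Lean document; each statement's English description precedes it below -/
import Mathlib

section
/- There exists a constant C > 0 such that for every ε > 0 and all continuously differentiable compactly supported functions f, g : ℝ³ → ℝ and every h ∈ L²(ℝ³), |∫_{ℝ³} f·g·h dx| ≤ ε ‖∇f‖_{L²}² + (C/ε) (‖g‖_{L²}² + ‖∇g‖_{L²}²) ‖h‖_{L²}². -/
/-!
Hölder's inequality with exponents `6, 3, 2` gives `|∫ f g h| ≤ ‖f‖₆ ‖g‖₃ ‖h‖₂`. In dimension three
the Gagliardo–Nirenberg–Sobolev inequality gives `‖u‖₆ ≤ S ‖∇u‖₂`, and Hölder applied to `|g|²`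
interpolates `‖g‖₃² ≤ ‖g‖₂ ‖g‖₆ ≤ S ‖g‖₂ ‖∇g‖₂`. Hence `|∫ f g h|² ≤ ‖∇f‖₂² · S³ ‖g‖₂ ‖∇g‖₂ ‖h‖₂²`,
and `|x| ≤ a √T ≤ ε a² + T / (4ε)` absorbs `‖∇f‖₂` with any prescribed weight `ε`.
-/

open MeasureTheory Real
open scoped ENNReal NNReal

section Holder

variable {α : Type*} {m : MeasurableSpace α} {μ : Measure α}

theorem norm_integral_le_toReal_eLpNorm_one {G : Type*} [NormedAddCommGroup G] [NormedSpace ℝ G]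
    (f : α → G) : ‖∫ x, f x ∂μ‖ ≤ (eLpNorm f 1 μ).toReal := by
  simpa only [eLpNorm_one_eq_lintegral_enorm, ofReal_norm] using norm_integral_le_lintegral_norm f

theorem eLpNorm_mul_mul_le {𝕜 : Type*} [NormedRing 𝕜] {p q r s t : ℝ≥0∞}
    [ENNReal.HolderTriple p q s] [ENNReal.HolderTriple s r t] {f g h : α → 𝕜}
    (hf : AEStronglyMeasurable f μ) (hg : AEStronglyMeasurable g μ)
    (hh : AEStronglyMeasurable h μ) :
    eLpNorm (fun x ↦ f x * g x * h x) t μ ≤ eLpNorm f p μ * eLpNorm g q μ * eLpNorm h r μ :=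
  calc eLpNorm (fun x ↦ f x * g x * h x) t μ
      ≤ eLpNorm (fun x ↦ f x * g x) s μ * eLpNorm h r μ :=
        eLpNorm_smul_le_mul_eLpNorm (φ := fun x ↦ f x * g x) hh (hf.mul hg)
    _ ≤ eLpNorm f p μ * eLpNorm g q μ * eLpNorm h r μ := by
        gcongr
        exact eLpNorm_smul_le_mul_eLpNorm (φ := f) hg hf

theorem eLpNorm_two_mul_sq_le {E : Type*} [NormedAddCommGroup E] {p q r : ℝ≥0∞}
    [ENNReal.HolderTriple p q r] {f : α → E} (hf : AEStronglyMeasurable f μ) :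
    eLpNorm f (2 * r) μ ^ 2 ≤ eLpNorm f p μ * eLpNorm f q μ :=
  calc eLpNorm f (2 * r) μ ^ 2 = eLpNorm (fun x ↦ ‖f x‖ * ‖f x‖) r μ := by
        rw [← ENNReal.rpow_two, ← ENNReal.ofReal_ofNat 2, mul_comm,
          ← eLpNorm_norm_rpow f two_pos]
        simp_rw [Real.rpow_two, sq]
    _ ≤ eLpNorm (fun x ↦ ‖f x‖) p μ * eLpNorm (fun x ↦ ‖f x‖) q μ :=
        eLpNorm_smul_le_mul_eLpNorm (φ := fun x ↦ ‖f x‖) hf.norm hf.norm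
    _ = eLpNorm f p μ * eLpNorm f q μ := by rw [eLpNorm_norm, eLpNorm_norm]

end Holder

section Sobolev

variable {E : Type*} [NormedAddCommGroup E] [NormedSpace ℝ E] [MeasurableSpace E] [BorelSpace E]
  [FiniteDimensional ℝ E] (μ : Measure E) [μ.IsAddHaarMeasure]

theorem eLpNorm_six_le_eLpNorm_fderiv {F : Type*} [NormedAddCommGroup F] [InnerProductSpace ℝ F]
    (hE : Module.finrank ℝ E = 3) {u : E → F} (hu : ContDiff ℝ 1 u) (h2u : HasCompactSupport u) :
    eLpNorm u 6 μ ≤ eLpNormLESNormFDerivOfEqInnerConst μ 2 * eLpNorm (fderiv ℝ u) 2 μ := by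
  exact_mod_cast eLpNorm_le_eLpNorm_fderiv_of_eq_inner μ hu h2u (p := 2) (p' := 6) one_le_two
    (by rw [hE]; norm_num) (by rw [hE]; norm_num)

theorem eLpNorm_mul_mul_sq_le (hE : Module.finrank ℝ E = 3) {f g h : E → ℝ}
    (hf : ContDiff ℝ 1 f) (hf2 : HasCompactSupport f) (hg : ContDiff ℝ 1 g)
    (hg2 : HasCompactSupport g) (hh : AEStronglyMeasurable h μ) :
    eLpNorm (fun x ↦ f x * g x * h x) 1 μ ^ 2 ≤
      (eLpNormLESNormFDerivOfEqInnerConst μ 2 * eLpNorm (fderiv ℝ f) 2 μ) ^ 2 *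
        (eLpNorm g 2 μ * (eLpNormLESNormFDerivOfEqInnerConst μ 2 * eLpNorm (fderiv ℝ g) 2 μ)) *
          eLpNorm h 2 μ ^ 2 := by
  have : ENNReal.HolderTriple 6 3 2 := .of_toReal ⟨by norm_num, by norm_num, by norm_num⟩
  have : ENNReal.HolderTriple 2 6 (3 / 2) := .of_toReal ⟨by norm_num, by norm_num, by norm_num⟩
  have hg3 : eLpNorm g 3 μ ^ 2 ≤ eLpNorm g 2 μ * eLpNorm g 6 μ := by
    simpa [ENNReal.mul_div_cancel] using
      eLpNorm_two_mul_sq_le (p := 2) (q := 6) (r := 3 / 2) hg.continuous.aestronglyMeasurable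
        (μ := μ)
  calc eLpNorm (fun x ↦ f x * g x * h x) 1 μ ^ 2
      ≤ eLpNorm f 6 μ ^ 2 * eLpNorm g 3 μ ^ 2 * eLpNorm h 2 μ ^ 2 := by
        rw [← mul_pow, ← mul_pow]
        gcongr
        exact eLpNorm_mul_mul_le (q := 3) (s := 2) hf.continuous.aestronglyMeasurable
          hg.continuous.aestronglyMeasurable hh
    _ ≤ _ := by
        gcongr
        · exact eLpNorm_six_le_eLpNorm_fderiv μ hE hf hf2
        · exact hg3.trans (by gcongr; exact eLpNorm_six_le_eLpNorm_fderiv μ hE hg hg2)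

theorem sq_abs_integral_mul_mul_le (hE : Module.finrank ℝ E = 3) {f g h : E → ℝ}
    (hf : ContDiff ℝ 1 f) (hf2 : HasCompactSupport f) (hg : ContDiff ℝ 1 g)
    (hg2 : HasCompactSupport g) (hh : MemLp h 2 μ) :
    |∫ x, f x * g x * h x ∂μ| ^ 2 ≤
      (eLpNorm (fderiv ℝ f) 2 μ).toReal ^ 2 *
        ((eLpNormLESNormFDerivOfEqInnerConst μ 2 : ℝ) ^ 3 *
          ((eLpNorm g 2 μ).toReal * (eLpNorm (fderiv ℝ g) 2 μ).toReal) *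
            (eLpNorm h 2 μ).toReal ^ 2) := by
  have hA := ((hf.continuous_fderiv one_ne_zero).memLp_of_hasCompactSupport (μ := μ)
    (hf2.fderiv (𝕜 := ℝ)) (p := 2)).eLpNorm_ne_top
  have hB := (hg.continuous.memLp_of_hasCompactSupport (μ := μ) hg2 (p := 2)).eLpNorm_ne_top
  have hD := ((hg.continuous_fderiv one_ne_zero).memLp_of_hasCompactSupport (μ := μ)
    (hg2.fderiv (𝕜 := ℝ)) (p := 2)).eLpNorm_ne_top
  calc |∫ x, f x * g x * h x ∂μ| ^ 2
      ≤ (eLpNorm (fun x ↦ f x * g x * h x) 1 μ).toReal ^ 2 := by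
        gcongr
        exact (norm_eq_abs _).symm.trans_le (norm_integral_le_toReal_eLpNorm_one _)
    _ ≤ _ := by
        rw [← ENNReal.toReal_pow]
        refine (ENNReal.toReal_mono (by finiteness)
          (eLpNorm_mul_mul_sq_le μ hE hf hf2 hg hg2 hh.1)).trans_eq ?_
        simp only [ENNReal.toReal_mul, ENNReal.toReal_pow, ENNReal.coe_toReal]
        ring

end Sobolev

theorem le_mul_sq_add_div_of_sq_le {x a T ε : ℝ} (hε : 0 < ε) (hT : 0 ≤ T)
    (h : x ^ 2 ≤ a ^ 2 * T) : x ≤ ε * a ^ 2 + T / (4 * ε) := by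
  have hR : a ^ 2 * T ≤ (ε * a ^ 2 + T / (4 * ε)) ^ 2 := by
    have := four_mul_le_sq_add (ε * a ^ 2) (T / (4 * ε))
    field_simp at this ⊢
    nlinarith
  exact le_of_sq_le_sq (h.trans hR) (by positivity)

/-- Trilinear estimate: there is `C > 0` such that for every `ε > 0`,
all `C¹` compactly supported `f, g : ℝ³ → ℝ` and every `h ∈ L²(ℝ³)`,
`|∫ f g h| ≤ ε ‖∇f‖₂² + (C/ε)(‖g‖₂² + ‖∇g‖₂²)‖h‖₂²`. -/
theorem trilinear_estimate_one :
    ∃ C > (0:ℝ), ∀ ε : ℝ, 0 < ε →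
      ∀ f g : EuclideanSpace ℝ (Fin 3) → ℝ,
        ContDiff ℝ 1 f → HasCompactSupport f →
        ContDiff ℝ 1 g → HasCompactSupport g →
        ∀ h : EuclideanSpace ℝ (Fin 3) → ℝ, MemLp h 2 volume →
          |∫ x, f x * g x * h x| ≤
            ε * (eLpNorm (fun y => ‖fderiv ℝ f y‖) 2 volume).toReal ^ 2
              + C / ε * ((eLpNorm g 2 volume).toReal ^ 2
                  + (eLpNorm (fun y => ‖fderiv ℝ g y‖) 2 volume).toReal ^ 2)
                * (eLpNorm h 2 volume).toReal ^ 2 := by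
  set S : ℝ≥0 := eLpNormLESNormFDerivOfEqInnerConst (volume : Measure (EuclideanSpace ℝ (Fin 3))) 2
  refine ⟨S ^ 3 / 8 + 1, by positivity, fun ε hε f g hf hf2 hg hg2 h hh ↦ ?_⟩
  have hI := sq_abs_integral_mul_mul_le volume (by simp) hf hf2 hg hg2 hh
  rw [eLpNorm_norm, eLpNorm_norm]
  set b := (eLpNorm g 2 volume).toReal
  set d := (eLpNorm (fderiv ℝ g) 2 volume).toReal
  set k := (eLpNorm h 2 volume).toReal
  have hbd : 2 * b * d ≤ b ^ 2 + d ^ 2 := two_mul_le_add_sq b d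
  refine (le_mul_sq_add_div_of_sq_le hε (by positivity) hI).trans ?_
  gcongr
  rw [div_le_iff₀ (by positivity)]
  field_simp
  nlinarith [mul_le_mul_of_nonneg_left hbd (by positivity : (0:ℝ) ≤ S ^ 3 * k ^ 2),
    mul_nonneg (sq_nonneg k) (add_nonneg (sq_nonneg b) (sq_nonneg d))]
end

section
/- Let p ∈ [1, 6/5), set σ = 3/(2p) − 1/4, and let C₂ > 0, C > 0, E₀ ≥ 0. There exist constants C₃ > 0 and δ₁ > 0 (depending only on p, C₂, C) such that the following holds for every δ ∈ (0, δ₁]. Suppose M : [0, ∞) → [0, ∞) is continuously differentiable and D, u : [0, ∞) → [0, ∞) are measurable functions satisfying: (i) M′(t) + D(t) ≤ C δ u(t)² for all t ≥ 0; (ii) C₂^{−1}(u(t)² + D(t)) ≤ M(t) ≤ C₂ (u(t)² + D(t)) for all t ≥ 0; and (iii) for every integer n ≥ 1 and integer l with 0 ≤ l ≤ 2nσ − 2, ∫₀ᵗ (1+s)^{l} u(s)^{2n} ds ≤ (C E₀)^{2n} + (C δ)^{2n} ∫₀ᵗ (1+s)^{l} D(s)^{n} ds for all t ≥ 0. Then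 for every integer n ≥ 1 and every integer l with 0 ≤ l ≤ 2nσ − 2 and all t ≥ 0: (1+t)^{l} M(t)^{n} + n ∫₀ᵗ (1+s)^{l} M(s)^{n−1} D(s) ds ≤ 2 M(0)^{n} + (C₃ E₀)^{2n} + 8 C₂ n σ ∫₀ᵗ (1+s)^{l−1} M(s)^{n−1} D(s) ds. -/
/-!
Multiplying (i) by `n (1+s)^l M^(n-1)` bounds the derivative of `(1+s)^l M^n` plus the weighted
dissipation by `l (1+s)^(l-1) M^n + Cδ n (1+s)^l M^(n-1) u²`. By (ii), splitting on whether
`u² ≤ D`, both `M^n` and `M^(n-1) u²` are controlled by `M^(n-1) D` and `(2 C₂)^(n-1) u^(2n)`.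
After integration, (iii) and `D^n ≤ C₂^(n-1) M^(n-1) D` turn the `u^(2n)` integral into
`(C E₀)^(2n)` plus `(Cδ)^(2n)` times the dissipation integral, which for small `δ` is absorbed
into the left-hand side; the remaining weight-`(l-1)` term has coefficient `4 l C₂ ≤ 8 C₂ n σ`.
-/

open MeasureTheory Real Set

section Algebra

variable {K m d w : ℝ} (k : ℕ)

theorem pow_mul_le_pow_mul_add_two_mul_pow (hm : 0 ≤ m) (hd : 0 ≤ d) (hw : 0 ≤ w) (hK : 0 ≤ K)
    (hmK : m ≤ K * (w + d)) : m ^ k * w ≤ m ^ k * d + (2 * K) ^ k * w ^ (k + 1) := by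
  rcases le_total w d with hwd | hdw
  · have := mul_le_mul_of_nonneg_left hwd (pow_nonneg hm k)
    have : 0 ≤ (2 * K) ^ k * w ^ (k + 1) :=
      mul_nonneg (pow_nonneg (by linarith) k) (pow_nonneg hw _)
    linarith
  · have : m ≤ 2 * K * w := by nlinarith
    calc m ^ k * w ≤ (2 * K * w) ^ k * w := by gcongr
      _ = (2 * K) ^ k * w ^ (k + 1) := by ring
      _ ≤ _ := le_add_of_nonneg_left (mul_nonneg (pow_nonneg hm k) hd)

theorem pow_succ_le_of_le_mul_add (hm : 0 ≤ m) (hd : 0 ≤ d) (hw : 0 ≤ w) (hK : 0 ≤ K)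
    (hmK : m ≤ K * (w + d)) : m ^ (k + 1) ≤ K * (2 * (m ^ k * d) + (2 * K) ^ k * w ^ (k + 1)) := by
  have := pow_mul_le_pow_mul_add_two_mul_pow k hm hd hw hK hmK
  calc m ^ (k + 1) = m ^ k * m := pow_succ m k
    _ ≤ m ^ k * (K * (w + d)) := by gcongr
    _ = K * (m ^ k * w + m ^ k * d) := by ring
    _ ≤ _ := mul_le_mul_of_nonneg_left (by linarith) hK

theorem pow_succ_le_of_le_mul (hd : 0 ≤ d) (hdm : d ≤ K * m) : d ^ (k + 1) ≤ K ^ k * (m ^ k * d) :=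
  calc d ^ (k + 1) = d ^ k * d := pow_succ d k
    _ ≤ (K * m) ^ k * d := by gcongr
    _ = K ^ k * (m ^ k * d) := by ring

/- The pointwise inequality at time `s`, with `e = (1+s)^l`, `e' = (1+s)^(l-1)`, `m = M s`,
`m' = M' s`, `d = D s` and `w = u s ^ 2`. -/
theorem weighted_energy_deriv_add_le {a l e e' m' : ℝ} (ha : 0 ≤ a) (hl : 0 ≤ l) (he' : 0 ≤ e')
    (he : e' ≤ e) (hm : 0 ≤ m) (hd : 0 ≤ d) (hw : 0 ≤ w) (hK : 0 ≤ K) (hmK : m ≤ K * (w + d))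
    (hm' : m' + d ≤ a * w) :
    l * e' * m ^ (k + 1) + (k + 1) * e * m ^ k * m' + (k + 1) * (e * m ^ k * d) ≤
      2 * l * K * (e' * m ^ k * d) + (l * K + a * (k + 1)) * (2 * K) ^ k * (e * w ^ (k + 1))
        + a * (k + 1) * (e * m ^ k * d) := by
  have he₀ : 0 ≤ e := he'.trans he
  have h₁ : l * e' * m ^ (k + 1) ≤ l * e' * (K * (2 * (m ^ k * d) + (2 * K) ^ k * w ^ (k + 1))) :=
    mul_le_mul_of_nonneg_left (pow_succ_le_of_le_mul_add k hm hd hw hK hmK) (by positivity)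
  have h₂ : l * e' * K * ((2 * K) ^ k * w ^ (k + 1)) ≤ l * e * K * ((2 * K) ^ k * w ^ (k + 1)) := by
    gcongr
  have h₃ : (k + 1) * e * m ^ k * (m' + d) ≤ (k + 1) * e * m ^ k * (a * w) :=
    mul_le_mul_of_nonneg_left hm' (mul_nonneg (mul_nonneg (by positivity) he₀) (pow_nonneg hm k))
  have h₄ : a * (k + 1) * e * (m ^ k * w) ≤
      a * (k + 1) * e * (m ^ k * d + (2 * K) ^ k * w ^ (k + 1)) :=
    mul_le_mul_of_nonneg_left (pow_mul_le_pow_mul_add_two_mul_pow k hm hd hw hK hmK)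
      (mul_nonneg (mul_nonneg ha (by positivity)) he₀)
  linarith

end Algebra

section Energy

variable {M D u : ℝ → ℝ} {K a l t : ℝ}

theorem integrableOn_Icc_of_norm_le_continuousOn {f g : ℝ → ℝ} {a b : ℝ}
    (hg : ContinuousOn g (Icc a b)) (hf : AEStronglyMeasurable f (volume.restrict (Icc a b)))
    (hfg : ∀ s ∈ Icc a b, ‖f s‖ ≤ g s) : IntegrableOn f (Icc a b) :=
  (hg.integrableOn_compact isCompact_Icc).mono' hf (ae_restrict_of_forall_mem measurableSet_Icc hfg)

theorem continuousOn_one_add_rpow (κ : ℝ) : ContinuousOn (fun s : ℝ => (1 + s) ^ κ) (Ici 0) :=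
  (continuousOn_const.add continuousOn_id).rpow_const fun s hs =>
    Or.inl (by simp only [Pi.add_apply, id]; rw [mem_Ici] at hs; linarith)

theorem integrableOn_rpow_mul_pow_mul_pow {φ : ℝ → ℝ} (hM : ContinuousOn M (Ici 0))
    (hM0 : ∀ s, 0 ≤ s → 0 ≤ M s) (hφ : Measurable φ) (hφ0 : ∀ s, 0 ≤ s → 0 ≤ φ s)
    (hφM : ∀ s, 0 ≤ s → φ s ≤ K * M s) (κ : ℝ) (i j : ℕ) (t : ℝ) :
    IntegrableOn (fun s => (1 + s) ^ κ * M s ^ i * φ s ^ j) (Icc 0 t) := by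
  have hIcc : Icc 0 t ⊆ Ici 0 := Icc_subset_Ici_self
  refine integrableOn_Icc_of_norm_le_continuousOn
    (g := fun s => K ^ j * ((1 + s) ^ κ * M s ^ (i + j)))
    ((continuousOn_const.mul ((continuousOn_one_add_rpow κ).mul (hM.pow _))).mono hIcc)
    ((((continuousOn_one_add_rpow κ).mul (hM.pow i)).mono hIcc).aestronglyMeasurable
      measurableSet_Icc |>.mul (hφ.pow_const j).aestronglyMeasurable) ?_
  rintro s ⟨hs, -⟩
  have hw : 0 < (1 + s) ^ κ := rpow_pos_of_pos (by linarith) κ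
  rw [Real.norm_of_nonneg (by have := hM0 s hs; have := hφ0 s hs; positivity), pow_add]
  calc (1 + s) ^ κ * M s ^ i * φ s ^ j ≤ (1 + s) ^ κ * M s ^ i * (K * M s) ^ j := by
        gcongr
        · exact mul_nonneg hw.le (pow_nonneg (hM0 s hs) i)
        · exact hφ0 s hs
        · exact hφM s hs
    _ = K ^ j * ((1 + s) ^ κ * (M s ^ i * M s ^ j)) := by ring

theorem integrableOn_rpow_mul_pow_mul (hM : ContinuousOn M (Ici 0)) (hM0 : ∀ s, 0 ≤ s → 0 ≤ M s)
    (hD : Measurable D) (hD0 : ∀ s, 0 ≤ s → 0 ≤ D s) (hDM : ∀ s, 0 ≤ s → D s ≤ K * M s)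
    (κ : ℝ) (k : ℕ) (t : ℝ) : IntegrableOn (fun s => (1 + s) ^ κ * M s ^ k * D s) (Icc 0 t) := by
  simpa using integrableOn_rpow_mul_pow_mul_pow hM hM0 hD hD0 hDM κ k 1 t

theorem integral_Icc_deriv_rpow_mul_pow (hM : ContDiffOn ℝ 1 M (Ici 0)) (ht : 0 ≤ t) (l : ℝ)
    (k : ℕ) :
    IntegrableOn (fun s => l * (1 + s) ^ (l - 1) * M s ^ (k + 1)
      + (k + 1) * (1 + s) ^ l * M s ^ k * derivWithin M (Ici 0) s) (Icc 0 t) ∧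
    ∫ s in Icc 0 t, (l * (1 + s) ^ (l - 1) * M s ^ (k + 1)
      + (k + 1) * (1 + s) ^ l * M s ^ k * derivWithin M (Ici 0) s) =
      (1 + t) ^ l * M t ^ (k + 1) - M 0 ^ (k + 1) := by
  have hcont : ContinuousOn (fun s => l * (1 + s) ^ (l - 1) * M s ^ (k + 1)
      + (k + 1) * (1 + s) ^ l * M s ^ k * derivWithin M (Ici 0) s) (Icc 0 t) :=
    (((continuousOn_const.mul (continuousOn_one_add_rpow _)).mul (hM.continuousOn.pow _)).add
      (((continuousOn_const.mul (continuousOn_one_add_rpow _)).mul (hM.continuousOn.pow _)).mul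
        (hM.continuousOn_derivWithin (uniqueDiffOn_Ici 0) le_rfl))).mono Icc_subset_Ici_self
  have hderiv : ∀ x ∈ Ioo 0 t, HasDerivWithinAt (fun s => (1 + s) ^ l * M s ^ (k + 1))
      (l * (1 + x) ^ (l - 1) * M x ^ (k + 1)
        + (k + 1) * (1 + x) ^ l * M x ^ k * derivWithin M (Ici 0) x) (Ioi x) x := by
    rintro x ⟨hx, -⟩
    have hw : HasDerivAt (fun s : ℝ => (1 + s) ^ l) (l * (1 + x) ^ (l - 1)) x := by
      simpa using ((hasDerivAt_id x).const_add 1).rpow_const (Or.inl (by positivity))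
    have hMx : HasDerivWithinAt M (derivWithin M (Ici 0) x) (Ioi x) x :=
      ((hM.differentiableOn_one x hx.le).hasDerivWithinAt).mono (Ioi_subset_Ici hx.le)
    refine (hw.hasDerivWithinAt.mul (hMx.fun_pow (k + 1))).congr_deriv ?_
    rw [Nat.add_sub_cancel, Nat.cast_succ]
    ring
  refine ⟨hcont.integrableOn_compact isCompact_Icc, ?_⟩
  rw [integral_Icc_eq_integral_Ioc, ← intervalIntegral.integral_of_le ht,
    intervalIntegral.integral_eq_sub_of_hasDeriv_right_of_le ht
      (((continuousOn_one_add_rpow l).mul (hM.continuousOn.pow _)).mono Icc_subset_Ici_self)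
      hderiv (hcont.intervalIntegrable_of_Icc ht)]
  simp

theorem weighted_energy_integral_le (hM : ContDiffOn ℝ 1 M (Ici 0))
    (hM0 : ∀ s, 0 ≤ s → 0 ≤ M s) (hD : Measurable D) (hD0 : ∀ s, 0 ≤ s → 0 ≤ D s)
    (hu : Measurable u) (hdiss : ∀ s, 0 ≤ s → derivWithin M (Ici 0) s + D s ≤ a * u s ^ 2)
    (hequiv : ∀ s, 0 ≤ s → u s ^ 2 + D s ≤ K * M s ∧ M s ≤ K * (u s ^ 2 + D s))
    (ha : 0 ≤ a) (hK : 0 ≤ K) (hl : 0 ≤ l) (ht : 0 ≤ t) (k : ℕ) :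
    (1 + t) ^ l * M t ^ (k + 1) - M 0 ^ (k + 1)
        + (k + 1) * ∫ s in Icc 0 t, (1 + s) ^ l * M s ^ k * D s ≤
      2 * l * K * (∫ s in Icc 0 t, (1 + s) ^ (l - 1) * M s ^ k * D s)
        + (l * K + a * (k + 1)) * (2 * K) ^ k * (∫ s in Icc 0 t, (1 + s) ^ l * u s ^ (2 * (k + 1)))
        + a * (k + 1) * ∫ s in Icc 0 t, (1 + s) ^ l * M s ^ k * D s := by
  obtain ⟨hF'int, hFTC⟩ := integral_Icc_deriv_rpow_mul_pow hM ht l k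
  have hMD (κ : ℝ) : IntegrableOn (fun s => (1 + s) ^ κ * M s ^ k * D s) (Icc 0 t) :=
    integrableOn_rpow_mul_pow_mul hM.continuousOn hM0 hD hD0
      (fun s hs => by nlinarith [hequiv s hs, sq_nonneg (u s)]) κ k t
  have hU : IntegrableOn (fun s => (1 + s) ^ l * u s ^ (2 * (k + 1))) (Icc 0 t) := by
    simpa [pow_mul] using integrableOn_rpow_mul_pow_mul_pow hM.continuousOn hM0
      (hu.pow_const 2) (fun s _ => sq_nonneg (u s))
      (fun s hs => by nlinarith [hequiv s hs, hD0 s hs]) l 0 (k + 1) t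
  have hpt : ∀ s ∈ Icc 0 t,
      l * (1 + s) ^ (l - 1) * M s ^ (k + 1)
          + (k + 1) * (1 + s) ^ l * M s ^ k * derivWithin M (Ici 0) s
          + (k + 1) * ((1 + s) ^ l * M s ^ k * D s) ≤
        2 * l * K * ((1 + s) ^ (l - 1) * M s ^ k * D s)
          + (l * K + a * (k + 1)) * (2 * K) ^ k * ((1 + s) ^ l * u s ^ (2 * (k + 1)))
          + a * (k + 1) * ((1 + s) ^ l * M s ^ k * D s) := by
    rintro s ⟨hs, -⟩
    rw [pow_mul]
    exact weighted_energy_deriv_add_le k ha hl (rpow_nonneg (by linarith) _)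
      (rpow_le_rpow_of_exponent_le (by linarith) (by linarith)) (hM0 s hs) (hD0 s hs)
      (sq_nonneg (u s)) hK (hequiv s hs).2 (hdiss s hs)
  have hlower : IntegrableOn (fun s => 2 * l * K * ((1 + s) ^ (l - 1) * M s ^ k * D s)
      + (l * K + a * (k + 1)) * (2 * K) ^ k * ((1 + s) ^ l * u s ^ (2 * (k + 1)))) (Icc 0 t) :=
    ((hMD (l - 1)).const_mul _).add (hU.const_mul _)
  have hint := setIntegral_mono_on (hF'int.add ((hMD l).const_mul _))
    (hlower.add ((hMD l).const_mul _)) measurableSet_Icc hpt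
  simp only [Pi.add_apply] at hint
  rw [integral_add hF'int ((hMD l).const_mul _), integral_add hlower ((hMD l).const_mul _),
    integral_add ((hMD (l - 1)).const_mul _) (hU.const_mul _), integral_const_mul,
    integral_const_mul, integral_const_mul, integral_const_mul, hFTC] at hint
  exact hint

theorem integral_rpow_mul_pow_succ_le (hM : ContinuousOn M (Ici 0)) (hM0 : ∀ s, 0 ≤ s → 0 ≤ M s)
    (hD : Measurable D) (hD0 : ∀ s, 0 ≤ s → 0 ≤ D s) (hDM : ∀ s, 0 ≤ s → D s ≤ K * M s)
    (l t : ℝ) (k : ℕ) :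
    ∫ s in Icc 0 t, (1 + s) ^ l * D s ^ (k + 1) ≤
      K ^ k * ∫ s in Icc 0 t, (1 + s) ^ l * M s ^ k * D s := by
  have hDn : IntegrableOn (fun s => (1 + s) ^ l * D s ^ (k + 1)) (Icc 0 t) := by
    simpa using integrableOn_rpow_mul_pow_mul_pow hM hM0 hD hD0 hDM l 0 (k + 1) t
  rw [← integral_const_mul]
  refine setIntegral_mono_on hDn
    ((integrableOn_rpow_mul_pow_mul hM hM0 hD hD0 hDM l k t).const_mul _)
    measurableSet_Icc fun s ⟨hs, _⟩ => ?_
  calc (1 + s) ^ l * D s ^ (k + 1) ≤ (1 + s) ^ l * (K ^ k * (M s ^ k * D s)) :=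
        mul_le_mul_of_nonneg_left (pow_succ_le_of_le_mul k (hD0 s hs) (hDM s hs))
          (rpow_nonneg (by linarith) l)
    _ = K ^ k * ((1 + s) ^ l * M s ^ k * D s) := by ring

theorem integral_rpow_mul_pow_mul_nonneg (hM0 : ∀ s, 0 ≤ s → 0 ≤ M s)
    (hD0 : ∀ s, 0 ≤ s → 0 ≤ D s) (κ t : ℝ) (k : ℕ) :
    0 ≤ ∫ s in Icc 0 t, (1 + s) ^ κ * M s ^ k * D s :=
  setIntegral_nonneg measurableSet_Icc fun s ⟨hs, _⟩ =>
    mul_nonneg (mul_nonneg (rpow_nonneg (by linarith) _) (pow_nonneg (hM0 s hs) k)) (hD0 s hs)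

theorem weighted_energy_add_dissipation_le (hM : ContDiffOn ℝ 1 M (Ici 0))
    (hM0 : ∀ s, 0 ≤ s → 0 ≤ M s) (hD : Measurable D) (hD0 : ∀ s, 0 ≤ s → 0 ≤ D s)
    (hu : Measurable u) (hdiss : ∀ s, 0 ≤ s → derivWithin M (Ici 0) s + D s ≤ a * u s ^ 2)
    (hequiv : ∀ s, 0 ≤ s → u s ^ 2 + D s ≤ K * M s ∧ M s ≤ K * (u s ^ 2 + D s))
    (ha : 0 ≤ a) (ha' : a ≤ 1 / 4) (hK : 0 ≤ K) (hl : 0 ≤ l) (ht : 0 ≤ t) (k : ℕ) {E b : ℝ}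
    (hb : 0 ≤ b)
    (hUD : ∫ s in Icc 0 t, (1 + s) ^ l * u s ^ (2 * (k + 1)) ≤
      E + b * ∫ s in Icc 0 t, (1 + s) ^ l * D s ^ (k + 1))
    (hsmall : (l * K + a * (k + 1)) * (2 * K) ^ k * (b * K ^ k) ≤ (k + 1) / 4) :
    (1 + t) ^ l * M t ^ (k + 1) + (k + 1) * ∫ s in Icc 0 t, (1 + s) ^ l * M s ^ k * D s ≤
      2 * M 0 ^ (k + 1) + 4 * l * K * (∫ s in Icc 0 t, (1 + s) ^ (l - 1) * M s ^ k * D s)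
        + 2 * ((l * K + a * (k + 1)) * (2 * K) ^ k) * E := by
  have henergy := weighted_energy_integral_le hM hM0 hD hD0 hu hdiss hequiv ha hK hl ht k
  have hDn := integral_rpow_mul_pow_succ_le hM.continuousOn hM0 hD hD0
    (fun s hs => by nlinarith [hequiv s hs, sq_nonneg (u s)]) l t k
  have hI := integral_rpow_mul_pow_mul_nonneg hM0 hD0 l t k
  have hFt : 0 ≤ (1 + t) ^ l * M t ^ (k + 1) :=
    mul_nonneg (rpow_nonneg (by linarith) _) (pow_nonneg (hM0 t ht) _)
  set I := ∫ s in Icc 0 t, (1 + s) ^ l * M s ^ k * D s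
  set c := (l * K + a * (k + 1)) * (2 * K) ^ k
  have hcU := mul_le_mul_of_nonneg_left
    (hUD.trans (add_le_add_right (mul_le_mul_of_nonneg_left hDn hb) E)) (by positivity : 0 ≤ c)
  have hcI := mul_le_mul_of_nonneg_right hsmall hI
  have haI : a * (k + 1) * I ≤ (k + 1) / 4 * I :=
    mul_le_mul_of_nonneg_right (by nlinarith) hI
  linarith

end Energy

/- The constants: `Λ = λ K + 2 K + 1` where `l ≤ λ (k + 1)`, `a = C δ` with `4 Λ a ≤ 1`, and
`C₃ = 4 Λ C`. -/
section Constants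

variable {K a l lam Λ : ℝ} (k : ℕ)

theorem mul_le_quarter_of_le {x : ℝ} (hx : x ≤ Λ) (ha0 : 0 ≤ a) (ha : 4 * Λ * a ≤ 1) :
    x * a ≤ 1 / 4 := by
  nlinarith [mul_le_mul_of_nonneg_right hx ha0]

theorem coeff_le_succ_mul (hK : 0 ≤ K) (hlam : 0 ≤ lam) (ha0 : 0 ≤ a) (ha : 4 * Λ * a ≤ 1)
    (hl : l ≤ lam * (k + 1)) (hΛ : lam * K + 2 * K + 1 ≤ Λ) :
    l * K + a * (k + 1) ≤ (k + 1) * (lam * K + 1) := by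
  have : 1 * a ≤ 1 / 4 := mul_le_quarter_of_le (by nlinarith [mul_nonneg hlam hK]) ha0 ha
  nlinarith

theorem coeff_mul_small_le (hK : 0 ≤ K) (hlam : 0 ≤ lam) (ha0 : 0 ≤ a) (ha : 4 * Λ * a ≤ 1)
    (hl : l ≤ lam * (k + 1)) (hΛ : lam * K + 2 * K + 1 ≤ Λ) :
    (l * K + a * (k + 1)) * (2 * K) ^ k * (a ^ (2 * (k + 1)) * K ^ k) ≤ (k + 1) / 4 := by
  have hc := coeff_le_succ_mul k hK hlam ha0 ha hl hΛ
  have hΛ₀ : 0 ≤ lam * K := mul_nonneg hlam hK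
  have ha₁ : 1 * a ≤ 1 / 4 := mul_le_quarter_of_le (by linarith) ha0 ha
  have hKa : K * a ≤ 1 / 4 := mul_le_quarter_of_le (by linarith) ha0 ha
  have hΛa : (lam * K + 1) * a ≤ 1 / 4 := mul_le_quarter_of_le (by linarith) ha0 ha
  have hgeo : (2 * K ^ 2 * a ^ 2) ^ k ≤ 1 :=
    pow_le_one₀ (by positivity) (by nlinarith [mul_nonneg hK ha0])
  calc (l * K + a * (k + 1)) * (2 * K) ^ k * (a ^ (2 * (k + 1)) * K ^ k)
      = (l * K + a * (k + 1)) * a ^ 2 * (2 * K ^ 2 * a ^ 2) ^ k := by ring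
    _ ≤ (k + 1) * (lam * K + 1) * a ^ 2 * 1 := by gcongr
    _ = (k + 1) * ((lam * K + 1) * a) * a := by ring
    _ ≤ (k + 1) * (1 / 4) * (1 / 4) := by gcongr; linarith
    _ ≤ (k + 1) / 4 := by linarith

theorem two_mul_coeff_le (hK : 0 ≤ K) (hlam : 0 ≤ lam) (ha0 : 0 ≤ a) (ha : 4 * Λ * a ≤ 1)
    (hl : l ≤ lam * (k + 1)) (hΛ : lam * K + 2 * K + 1 ≤ Λ) :
    2 * ((l * K + a * (k + 1)) * (2 * K) ^ k) ≤ (4 * Λ) ^ (2 * (k + 1)) := by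
  have hΛ₀ : 1 ≤ Λ := by nlinarith [mul_nonneg hlam hK]
  have hc : l * K + a * (k + 1) ≤ (k + 1) * Λ :=
    (coeff_le_succ_mul k hK hlam ha0 ha hl hΛ).trans (by gcongr; linarith)
  have hk : (2 * (k + 1) : ℝ) ≤ 4 ^ (k + 1) := by
    have : k + 1 < 2 ^ (k + 1) := Nat.lt_two_pow_self
    have : (2 : ℝ) * (k + 1) ≤ 2 * 2 ^ (k + 1) := by exact_mod_cast by omega
    calc (2 * (k + 1) : ℝ) ≤ 2 * 2 ^ (k + 1) := this
      _ ≤ 2 ^ (k + 1) * 2 ^ (k + 1) := by gcongr; exact le_self_pow₀ (by norm_num) (by omega)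
      _ = 4 ^ (k + 1) := by rw [← mul_pow]; norm_num
  calc 2 * ((l * K + a * (k + 1)) * (2 * K) ^ k)
      ≤ 2 * ((k + 1) * Λ * Λ ^ k) := by
        gcongr
        nlinarith [mul_nonneg hlam hK]
    _ = 2 * (k + 1) * Λ ^ (k + 1) := by ring
    _ ≤ 4 ^ (k + 1) * Λ ^ (k + 1) := by gcongr
    _ = (4 * Λ) ^ (k + 1) := (mul_pow _ _ _).symm
    _ ≤ (4 * Λ) ^ (2 * (k + 1)) := pow_le_pow_right₀ (by linarith) (by omega)

end Constants

theorem weighted_energy_estimate_general (p : ℝ)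
    (C₂ C : ℝ) (hC₂ : 0 < C₂) (hC : 0 < C) :
    ∃ C₃ > (0:ℝ), ∃ δ₁ > (0:ℝ),
      ∀ E₀ : ℝ, 0 ≤ E₀ → ∀ δ : ℝ, 0 < δ → δ ≤ δ₁ →
      ∀ M D u : ℝ → ℝ,
        ContDiffOn ℝ 1 M (Set.Ici 0) → (∀ t : ℝ, 0 ≤ t → 0 ≤ M t) →
        Measurable D → (∀ t : ℝ, 0 ≤ t → 0 ≤ D t) →
        Measurable u → (∀ t : ℝ, 0 ≤ t → 0 ≤ u t) →
        (∀ t : ℝ, 0 ≤ t → derivWithin M (Set.Ici 0) t + D t ≤ C * δ * u t ^ 2) →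
        (∀ t : ℝ, 0 ≤ t →
          C₂⁻¹ * (u t ^ 2 + D t) ≤ M t ∧ M t ≤ C₂ * (u t ^ 2 + D t)) →
        (∀ n : ℕ, 1 ≤ n → ∀ l : ℕ, (l : ℝ) ≤ 2 * n * (3 / (2 * p) - 1 / 4) - 2 →
          ∀ t : ℝ, 0 ≤ t →
            ∫ s in Set.Icc (0:ℝ) t, (1 + s) ^ (l : ℝ) * u s ^ (2 * n) ≤
              (C * E₀) ^ (2 * n)
                + (C * δ) ^ (2 * n) *
                    ∫ s in Set.Icc (0:ℝ) t, (1 + s) ^ (l : ℝ) * D s ^ n) →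
        ∀ n : ℕ, 1 ≤ n → ∀ l : ℕ, (l : ℝ) ≤ 2 * n * (3 / (2 * p) - 1 / 4) - 2 →
        ∀ t : ℝ, 0 ≤ t →
          (1 + t) ^ (l : ℝ) * M t ^ n
            + n * ∫ s in Set.Icc (0:ℝ) t, (1 + s) ^ (l : ℝ) * M s ^ (n - 1) * D s ≤
          2 * M 0 ^ n + (C₃ * E₀) ^ (2 * n)
            + 8 * C₂ * n * (3 / (2 * p) - 1 / 4) *
                ∫ s in Set.Icc (0:ℝ) t, (1 + s) ^ ((l : ℝ) - 1) * M s ^ (n - 1) * D s := by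
  set σ := 3 / (2 * p) - 1 / 4
  set Λ := 2 * |σ| * C₂ + 2 * C₂ + 1 with hΛ
  refine ⟨4 * Λ * C, by positivity, 1 / (4 * Λ * C), by positivity, ?_⟩
  intro E₀ hE₀ δ hδ hδ₁ M D u hM hM0 hD hD0 hu _ hdiss hequiv hU n hn l hl t ht
  obtain ⟨k, rfl⟩ := Nat.exists_eq_add_of_le' hn
  replace hequiv (s) (hs : 0 ≤ s) : u s ^ 2 + D s ≤ C₂ * M s ∧ M s ≤ C₂ * (u s ^ 2 + D s) :=
    ⟨(inv_mul_le_iff₀ hC₂).1 (hequiv s hs).1, (hequiv s hs).2⟩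
  have ha : 4 * Λ * (C * δ) ≤ 1 := by
    rw [le_div_iff₀ (by positivity)] at hδ₁; linarith
  have ha' : C * δ ≤ 1 / 4 := by
    nlinarith [mul_nonneg (mul_nonneg (abs_nonneg σ) hC₂.le) (mul_nonneg hC.le hδ.le)]
  push_cast at hl ⊢
  have hlσ : (l : ℝ) ≤ 2 * |σ| * (k + 1) := by nlinarith [le_abs_self σ]
  have key := weighted_energy_add_dissipation_le hM hM0 hD hD0 hu hdiss hequiv (by positivity)
    ha' hC₂.le (Nat.cast_nonneg l) ht k (by positivity)
    (hU (k + 1) hn l (by push_cast; exact hl) t ht)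
    (coeff_mul_small_le k hC₂.le (by positivity) (by positivity) ha hlσ hΛ.ge)
  have hcE := mul_le_mul_of_nonneg_right (two_mul_coeff_le k hC₂.le (by positivity)
    (by positivity) ha hlσ hΛ.ge) (by positivity : 0 ≤ (C * E₀) ^ (2 * (k + 1)))
  have hlJ := mul_le_mul_of_nonneg_right (by nlinarith : 4 * l * C₂ ≤ 8 * C₂ * (k + 1) * σ)
    (integral_rpow_mul_pow_mul_nonneg hM0 hD0 ((l : ℝ) - 1) t k)
  rw [mul_assoc, mul_pow (4 * Λ)]
  linarith

/-- Abstract form of Lemma 4.2: the weighted energy inequality with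
dissipation, deduced from the differential inequality (i), the equivalence (ii), and the
weighted higher-power estimate (iii). -/
theorem weighted_energy_estimate (p : ℝ) (hp1 : 1 ≤ p) (hp2 : p < 6/5)
    (C₂ C : ℝ) (hC₂ : 0 < C₂) (hC : 0 < C) :
    ∃ C₃ > (0:ℝ), ∃ δ₁ > (0:ℝ),
      ∀ E₀ : ℝ, 0 ≤ E₀ → ∀ δ : ℝ, 0 < δ → δ ≤ δ₁ →
      ∀ M D u : ℝ → ℝ,
        ContDiffOn ℝ 1 M (Set.Ici 0) → (∀ t : ℝ, 0 ≤ t → 0 ≤ M t) →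
        Measurable D → (∀ t : ℝ, 0 ≤ t → 0 ≤ D t) →
        Measurable u → (∀ t : ℝ, 0 ≤ t → 0 ≤ u t) →
        (∀ t : ℝ, 0 ≤ t → derivWithin M (Set.Ici 0) t + D t ≤ C * δ * u t ^ 2) →
        (∀ t : ℝ, 0 ≤ t →
          C₂⁻¹ * (u t ^ 2 + D t) ≤ M t ∧ M t ≤ C₂ * (u t ^ 2 + D t)) →
        (∀ n : ℕ, 1 ≤ n → ∀ l : ℕ, (l : ℝ) ≤ 2 * n * (3 / (2 * p) - 1 / 4) - 2 →
          ∀ t : ℝ, 0 ≤ t →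
            ∫ s in Set.Icc (0:ℝ) t, (1 + s) ^ (l : ℝ) * u s ^ (2 * n) ≤
              (C * E₀) ^ (2 * n)
                + (C * δ) ^ (2 * n) *
                    ∫ s in Set.Icc (0:ℝ) t, (1 + s) ^ (l : ℝ) * D s ^ n) →
        ∀ n : ℕ, 1 ≤ n → ∀ l : ℕ, (l : ℝ) ≤ 2 * n * (3 / (2 * p) - 1 / 4) - 2 →
        ∀ t : ℝ, 0 ≤ t →
          (1 + t) ^ (l : ℝ) * M t ^ n
            + n * ∫ s in Set.Icc (0:ℝ) t, (1 + s) ^ (l : ℝ) * M s ^ (n - 1) * D s ≤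
          2 * M 0 ^ n + (C₃ * E₀) ^ (2 * n)
            + 8 * C₂ * n * (3 / (2 * p) - 1 / 4) *
                ∫ s in Set.Icc (0:ℝ) t, (1 + s) ^ ((l : ℝ) - 1) * M s ^ (n - 1) * D s :=
  weighted_energy_estimate_general p C₂ C hC₂ hC
end
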